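/- arXiv:1505.06039 — 4 statements merged into one kernel-verified Lean document; each statement's English description precedes it below -/
import Mathlib

section
/- For all ξ in ℂ \ ℝ≤0, the modified Bessel function K₁ satisfies the integral representation K₁(ξ) = (e^{-ξ}/ξ) ∫₀^∞ e^{-t} √(t² + 2ξt) dt, where √ denotes the principal branch of the square root. -/
open Complex MeasureTheory

/-- The modified Bessel function of the second kind of order one,
defined (for `Re ξ > 0`) by `K₁(ξ) = ξ ∫₁^∞ e^{-ξ s} √(s² - 1) ds`. -/
noncomputable def K1orig (ξ : ℂ) : ℂ :=
  ξ * ∫ s in Set.Ioi (1 : ℝ), Complex.exp (-ξ * s) * ((Real.sqrt (s ^ 2 - 1) : ℝ) : ℂ)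

/-- The claimed analytic continuation:
`K₁(ξ) = (e^{-ξ}/ξ) ∫₀^∞ e^{-t} √(t² + 2ξt) dt` with the principal square root. -/
noncomputable def K1cont (ξ : ℂ) : ℂ :=
  (Complex.exp (-ξ) / ξ) *
    ∫ t in Set.Ioi (0 : ℝ), Complex.exp (-(t : ℂ)) * ((t : ℂ) ^ 2 + 2 * ξ * t) ^ ((1 : ℂ) / 2)

section Auxiliary

open Set Metric Filter

lemma base_mem_slitPlane {ξ : ℂ} (hξ : ξ ∈ Complex.slitPlane) {t : ℝ} (ht : 0 < t) :
    ((t:ℂ)^2 + 2*ξ*(t:ℂ)) ∈ Complex.slitPlane := by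
  rw [Complex.mem_slitPlane_iff] at hξ ⊢
  rcases hξ with h | h
  · left
    simp only [Complex.add_re, Complex.mul_re, Complex.ofReal_re, Complex.ofReal_im, pow_two,
      Complex.mul_im, Complex.re_ofNat, Complex.im_ofNat]
    nlinarith
  · right
    simp only [Complex.add_im, Complex.mul_im, Complex.ofReal_re, Complex.ofReal_im, pow_two,
      Complex.mul_re, Complex.re_ofNat, Complex.im_ofNat]
    intro hc
    apply h
    nlinarith

lemma exists_ball_bound {ξ₀ : ℂ} (hξ₀ : ξ₀ ∈ Complex.slitPlane) :
    ∃ ε > 0, ∃ c > 0, ∀ ξ ∈ ball ξ₀ ε, ξ ∈ Complex.slitPlane ∧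
      ∀ t : ℝ, 0 ≤ t → c ≤ ‖(t:ℂ) + 2*ξ‖ := by
  by_cases him : ξ₀.im = 0
  · have hre : 0 < ξ₀.re := by
      rcases Complex.mem_slitPlane_iff.mp hξ₀ with h | h
      · exact h
      · exact absurd him h
    refine ⟨ξ₀.re/2, by linarith, ξ₀.re, hre, fun ξ hξ => ?_⟩
    have hd : ‖ξ - ξ₀‖ < ξ₀.re/2 := by
      simpa [Complex.dist_eq] using hξ
    have h1 : |ξ.re - ξ₀.re| < ξ₀.re/2 :=
      lt_of_le_of_lt (by simpa using Complex.abs_re_le_norm (ξ - ξ₀)) hd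
    have h2 : ξ₀.re/2 < ξ.re := by
      cases' abs_lt.mp h1 with hl hr; linarith
    constructor
    · exact Complex.mem_slitPlane_iff.mpr (Or.inl (by linarith))
    · intro t ht
      have : ((t:ℂ) + 2*ξ).re ≤ ‖(t:ℂ) + 2*ξ‖ := Complex.re_le_norm _
      have hre' : ((t:ℂ) + 2*ξ).re = t + 2*ξ.re := by simp
      linarith [hre' ▸ this]
  · refine ⟨|ξ₀.im|/2, by positivity, |ξ₀.im|, by positivity, fun ξ hξ => ?_⟩
    have hd : ‖ξ - ξ₀‖ < |ξ₀.im|/2 := by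
      simpa [Complex.dist_eq] using hξ
    have h1 : |ξ.im - ξ₀.im| < |ξ₀.im|/2 :=
      lt_of_le_of_lt (by simpa using Complex.abs_im_le_norm (ξ - ξ₀)) hd
    have h2 : |ξ₀.im|/2 < |ξ.im| := by
      have := abs_sub_abs_le_abs_sub ξ₀.im ξ.im
      rw [abs_sub_comm] at h1
      linarith
    constructor
    · exact Complex.mem_slitPlane_iff.mpr (Or.inr (by intro hc; rw [hc, abs_zero] at h2; linarith [abs_pos.mpr him]))
    · intro t ht
      have him' : ((t:ℂ) + 2*ξ).im = 2*ξ.im := by simp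
      have : |((t:ℂ) + 2*ξ).im| ≤ ‖(t:ℂ) + 2*ξ‖ := Complex.abs_im_le_norm _
      rw [him'] at this
      have h3 : 2*|ξ.im| ≤ ‖(t:ℂ) + 2*ξ‖ := by
        calc 2*|ξ.im| = |2*ξ.im| := by rw [abs_mul]; norm_num
        _ ≤ _ := this
      linarith

lemma ofReal_cpow_half {r : ℝ} (hr : 0 ≤ r) :
    ((r:ℂ)) ^ ((1:ℂ)/2) = ((Real.sqrt r : ℝ) : ℂ) := by
  rw [show ((1:ℂ)/2) = (((1/2 : ℝ) : ℝ) : ℂ) by norm_num, ← Complex.ofReal_cpow hr,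
    ← Real.sqrt_eq_rpow]

lemma integrable_aux1 {c : ℝ} (hc : 0 < c) :
    IntegrableOn (fun t : ℝ => Real.exp (-t) * Real.sqrt t / Real.sqrt c) (Ioi 0) := by
  have h := integrableOn_rpow_mul_exp_neg_mul_rpow (p := 1) (s := 1/2) (b := 1)
    (by norm_num) one_pos one_pos
  have h' : IntegrableOn (fun t : ℝ => Real.exp (-t) * Real.sqrt t) (Ioi 0) := by
    refine h.congr_fun (fun t ht => ?_) measurableSet_Ioi
    dsimp only
    rw [Real.rpow_one, Real.sqrt_eq_rpow]
    ring_nf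
  exact h'.div_const _

lemma integrable_aux2 (C : ℝ) :
    IntegrableOn (fun t : ℝ => Real.exp (-t) * (t + C)) (Ioi 0) := by
  have h1 := integrableOn_rpow_mul_exp_neg_mul_rpow (p := 1) (s := 1) (b := 1)
    (by norm_num) one_pos one_pos
  have h1' : IntegrableOn (fun t : ℝ => Real.exp (-t) * t) (Ioi 0) := by
    refine h1.congr_fun (fun t ht => ?_) measurableSet_Ioi
    simp only [Real.rpow_one]
    ring
  have h2 : IntegrableOn (fun t : ℝ => Real.exp (-t) * C) (Ioi 0) := by
    have := (exp_neg_integrableOn_Ioi 0 one_pos)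
    have h2' : IntegrableOn (fun t : ℝ => Real.exp (-t)) (Ioi 0) := by
      refine this.congr_fun (fun t ht => ?_) measurableSet_Ioi
      norm_num
    exact h2'.mul_const _
  refine IntegrableOn.congr_fun (h1'.add h2) (fun t ht => ?_) measurableSet_Ioi
  simp only [Pi.add_apply]
  ring

lemma integrable_aux3 {δ : ℝ} (hδ : 0 < δ) :
    IntegrableOn (fun s : ℝ => Real.exp (-δ*s) * s^2) (Ioi 1) := by
  have h := integrableOn_rpow_mul_exp_neg_mul_rpow (p := 1) (s := 2) (b := δ)
    (by norm_num) one_pos hδ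
  have h' : IntegrableOn (fun s : ℝ => Real.exp (-δ*s) * s^2) (Ioi 0) := by
    refine h.congr_fun (fun t ht => ?_) measurableSet_Ioi
    dsimp only
    rw [Real.rpow_one, show (2:ℝ) = ((2:ℕ):ℝ) by norm_num, Real.rpow_natCast]
    ring
  exact h'.mono_set (Ioi_subset_Ioi zero_le_one)

lemma K1cont_diff {ξ₀ : ℂ} (hξ₀ : ξ₀ ∈ Complex.slitPlane) : DifferentiableAt ℂ K1cont ξ₀ := by
  obtain ⟨ε, hε, c, hc, hball⟩ := exists_ball_bound hξ₀
  set F : ℂ → ℝ → ℂ := fun ξ t =>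
    Complex.exp (-(t:ℂ)) * ((t:ℂ)^2 + 2*ξ*(t:ℂ)) ^ ((1:ℂ)/2) with hFdef
  set F' : ℂ → ℝ → ℂ := fun ξ t =>
    Complex.exp (-(t:ℂ)) * (((1:ℂ)/2) * ((t:ℂ)^2 + 2*ξ*(t:ℂ)) ^ ((1:ℂ)/2 - 1) * (2*(t:ℂ)))
    with hF'def
  have hcont : ∀ ξ ∈ Complex.slitPlane, ContinuousOn (F ξ) (Ioi 0) := by
    intro ξ hξ t ht
    apply ContinuousAt.continuousWithinAt
    apply ContinuousAt.mul
    · exact (Complex.continuous_exp.comp (Complex.continuous_ofReal.neg)).continuousAt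
    · have hbase : ContinuousAt (fun t : ℝ => (t:ℂ)^2 + 2*ξ*(t:ℂ)) t := by fun_prop
      exact hbase.cpow continuousAt_const (base_mem_slitPlane hξ ht)
  have hcont' : ContinuousOn (F' ξ₀) (Ioi 0) := by
    intro t ht
    apply ContinuousAt.continuousWithinAt
    apply ContinuousAt.mul
    · exact (Complex.continuous_exp.comp (Complex.continuous_ofReal.neg)).continuousAt
    · apply ContinuousAt.mul
      · apply ContinuousAt.mul continuousAt_const
        have hbase : ContinuousAt (fun t : ℝ => (t:ℂ)^2 + 2*ξ₀*(t:ℂ)) t := by fun_prop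
        exact hbase.cpow continuousAt_const (base_mem_slitPlane hξ₀ ht)
      · fun_prop
  have habs : ∀ {ξ : ℂ} {t : ℝ}, 0 < t → ξ ∈ Complex.slitPlane →
      ‖(t:ℂ)^2 + 2*ξ*(t:ℂ)‖ = t * ‖(t:ℂ) + 2*ξ‖ := by
    intro ξ t ht hξ
    rw [show (t:ℂ)^2 + 2*ξ*(t:ℂ) = (t:ℂ) * ((t:ℂ) + 2*ξ) by ring, norm_mul,
      Complex.norm_real, Real.norm_eq_abs, abs_of_pos ht]
  have key := hasDerivAt_integral_of_dominated_loc_of_deriv_le (μ := volume.restrict (Ioi 0))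
      (F := F) (F' := F') (x₀ := ξ₀)
      (bound := fun t => Real.exp (-t) * Real.sqrt t / Real.sqrt c) (ball_mem_nhds ξ₀ hε)
      ?_ ?_ ?_ ?_ (integrable_aux1 hc) ?_
  · have hI : DifferentiableAt ℂ (fun ξ => ∫ t in Ioi (0:ℝ), F ξ t) ξ₀ :=
      key.2.differentiableAt
    have h0 : ξ₀ ≠ 0 := Complex.slitPlane_ne_zero hξ₀
    have hdiv : DifferentiableAt ℂ (fun ξ : ℂ => Complex.exp (-ξ) / ξ) ξ₀ :=
      (differentiableAt_id.neg.cexp).div differentiableAt_id h0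
    have := hdiv.mul hI
    unfold K1cont
    exact this
  · filter_upwards [ball_mem_nhds ξ₀ hε] with ξ hξ
    exact (hcont ξ (hball ξ hξ).1).aestronglyMeasurable measurableSet_Ioi
  · -- integrability of F ξ₀
    apply Integrable.mono' (integrable_aux2 (2*‖ξ₀‖))
      ((hcont ξ₀ hξ₀).aestronglyMeasurable measurableSet_Ioi)
    rw [ae_restrict_iff' measurableSet_Ioi]
    refine Eventually.of_forall (fun t ht => ?_)
    have ht : 0 < t := ht
    have hz : ((t:ℂ)^2 + 2*ξ₀*(t:ℂ)) ≠ 0 :=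
      Complex.slitPlane_ne_zero (base_mem_slitPlane hξ₀ ht)
    have h1 : ‖F ξ₀ t‖ = Real.exp (-t) *
        ‖(t:ℂ)^2 + 2*ξ₀*(t:ℂ)‖ ^ ((1:ℝ)/2) := by
      rw [hFdef]
      simp only [norm_mul, Complex.norm_exp]
      rw [norm_cpow_of_ne_zero hz]
      norm_num
    rw [h1]
    have h2 : ‖(t:ℂ)^2 + 2*ξ₀*(t:ℂ)‖ ≤ (t + 2*‖ξ₀‖)^2 := by
      calc ‖(t:ℂ)^2 + 2*ξ₀*(t:ℂ)‖
          ≤ ‖(t:ℂ)^2‖ + ‖2*ξ₀*(t:ℂ)‖ := norm_add_le _ _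
        _ = t^2 + 2*‖ξ₀‖*t := by
            simp [norm_mul, Complex.norm_real, abs_of_pos ht, _root_.sq_abs]
        _ ≤ (t + 2*‖ξ₀‖)^2 := by nlinarith [norm_nonneg ξ₀, ht.le]
    have h3 : ‖(t:ℂ)^2 + 2*ξ₀*(t:ℂ)‖ ^ ((1:ℝ)/2) ≤ t + 2*‖ξ₀‖ := by
      rw [← Real.sqrt_eq_rpow]
      calc Real.sqrt (‖(t:ℂ)^2 + 2*ξ₀*(t:ℂ)‖) ≤
          Real.sqrt ((t + 2*‖ξ₀‖)^2) := Real.sqrt_le_sqrt h2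
        _ = t + 2*‖ξ₀‖ := Real.sqrt_sq (by positivity)
    exact mul_le_mul_of_nonneg_left h3 (Real.exp_pos _).le
  · exact hcont'.aestronglyMeasurable measurableSet_Ioi
  · -- bound on F'
    rw [ae_restrict_iff' measurableSet_Ioi]
    refine Eventually.of_forall (fun t ht ξ hξ => ?_)
    have ht : 0 < t := ht
    obtain ⟨hξs, hineq⟩ := hball ξ hξ
    have hz : ((t:ℂ)^2 + 2*ξ*(t:ℂ)) ≠ 0 :=
      Complex.slitPlane_ne_zero (base_mem_slitPlane hξs ht)
    have h1 : ‖F' ξ t‖ = Real.exp (-t) *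
        (t * ‖(t:ℂ)^2 + 2*ξ*(t:ℂ)‖ ^ (-(1:ℝ)/2)) := by
      rw [hF'def]
      simp only [norm_mul, Complex.norm_exp, norm_div, norm_one,
        Complex.norm_two, Complex.norm_real, Real.norm_eq_abs]
      rw [norm_cpow_of_ne_zero hz]
      rw [show ((1:ℂ)/2 - 1).re = -(1:ℝ)/2 by norm_num,
        show ((1:ℂ)/2 - 1).im = 0 by norm_num]
      rw [abs_of_pos ht]
      simp [Complex.neg_re, Complex.ofReal_re]
      ring
    rw [h1]
    have hzc : t * c ≤ ‖(t:ℂ)^2 + 2*ξ*(t:ℂ)‖ := by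
      rw [habs ht hξs]
      exact mul_le_mul_of_nonneg_left (hineq t ht.le) ht.le
    have h2 : ‖(t:ℂ)^2 + 2*ξ*(t:ℂ)‖ ^ (-(1:ℝ)/2) ≤ (t*c) ^ (-(1:ℝ)/2) :=
      Real.rpow_le_rpow_of_nonpos (by positivity) hzc (by norm_num)
    have h3 : (t*c) ^ (-(1:ℝ)/2) = (Real.sqrt t * Real.sqrt c)⁻¹ := by
      rw [show (-(1:ℝ)/2) = -((1:ℝ)/2) by norm_num, Real.rpow_neg (by positivity),
        ← Real.sqrt_eq_rpow, Real.sqrt_mul ht.le]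
    have h4 : t * (t*c) ^ (-(1:ℝ)/2) = Real.sqrt t / Real.sqrt c := by
      rw [h3]
      have hst : (0:ℝ) < Real.sqrt t := Real.sqrt_pos.mpr ht
      have hsc : (0:ℝ) < Real.sqrt c := Real.sqrt_pos.mpr hc
      have hts := Real.mul_self_sqrt ht.le
      rw [mul_inv, show t * ((Real.sqrt t)⁻¹ * (Real.sqrt c)⁻¹) =
        (t * (Real.sqrt t)⁻¹) * (Real.sqrt c)⁻¹ by ring, ← div_eq_mul_inv, ← div_eq_mul_inv]
      congr 1
      rw [div_eq_iff hst.ne']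
      exact hts.symm
    calc Real.exp (-t) * (t * ‖(t:ℂ)^2 + 2*ξ*(t:ℂ)‖ ^ (-(1:ℝ)/2))
        ≤ Real.exp (-t) * (t * (t*c) ^ (-(1:ℝ)/2)) := by
          apply mul_le_mul_of_nonneg_left _ (Real.exp_pos _).le
          exact mul_le_mul_of_nonneg_left h2 ht.le
      _ = Real.exp (-t) * Real.sqrt t / Real.sqrt c := by rw [h4]; ring
  · -- differentiability
    rw [ae_restrict_iff' measurableSet_Ioi]
    refine Eventually.of_forall (fun t ht ξ hξ => ?_)
    have ht : 0 < t := ht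
    have hξs := (hball ξ hξ).1
    have hb : HasDerivAt (fun ξ : ℂ => (t:ℂ)^2 + 2*ξ*(t:ℂ)) (2*(t:ℂ)) ξ := by
      simpa using (((hasDerivAt_id ξ).const_mul (2:ℂ)).mul_const ((t:ℂ))).const_add ((t:ℂ)^2)
    exact (hb.cpow_const (base_mem_slitPlane hξs ht)).const_mul _

lemma K1orig_diff {ξ₀ : ℂ} (h : 0 < ξ₀.re) : DifferentiableAt ℂ K1orig ξ₀ := by
  set δ : ℝ := ξ₀.re/2 with hδdef
  have hδ : 0 < δ := by positivity
  set F : ℂ → ℝ → ℂ := fun ξ s =>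
    Complex.exp (-ξ * (s:ℂ)) * ((Real.sqrt (s^2 - 1) : ℝ) : ℂ) with hFdef
  set F' : ℂ → ℝ → ℂ := fun ξ s =>
    Complex.exp (-ξ * (s:ℂ)) * (-(s:ℂ)) * ((Real.sqrt (s^2 - 1) : ℝ) : ℂ) with hF'def
  have hcont : ∀ ξ : ℂ, Continuous (F ξ) := by
    intro ξ
    apply Continuous.mul
    · exact Complex.continuous_exp.comp (by fun_prop)
    · fun_prop
  have hcont' : Continuous (F' ξ₀) := by
    apply Continuous.mul
    · apply Continuous.mul
      · exact Complex.continuous_exp.comp (by fun_prop)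
      · fun_prop
    · fun_prop
  have hre : ∀ ξ : ℂ, ∀ s : ℝ, (-ξ * (s:ℂ)).re = -(ξ.re * s) := by
    intro ξ s
    simp [Complex.mul_re]
  have hnorm : ∀ ξ : ℂ, ∀ s : ℝ, 1 < s →
      ‖F ξ s‖ = Real.exp (-(ξ.re * s)) * Real.sqrt (s^2 - 1) := by
    intro ξ s hs
    rw [hFdef]
    simp only [norm_mul, Complex.norm_exp, Complex.norm_real, Real.norm_eq_abs, hre]
    rw [_root_.abs_of_nonneg (Real.sqrt_nonneg _)]
  have hsqrt_le : ∀ s : ℝ, 1 < s → Real.sqrt (s^2 - 1) ≤ s := by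
    intro s hs
    calc Real.sqrt (s^2 - 1) ≤ Real.sqrt (s^2) := Real.sqrt_le_sqrt (by nlinarith)
      _ = s := Real.sqrt_sq (by linarith)
  have hexp_le : ∀ ξ ∈ ball ξ₀ δ, ∀ s : ℝ, 1 < s →
      Real.exp (-(ξ.re * s)) ≤ Real.exp (-δ*s) := by
    intro ξ hξ s hs
    apply Real.exp_le_exp.mpr
    have hd : ‖ξ - ξ₀‖ < δ := by simpa [Complex.dist_eq] using hξ
    have h1 : |ξ.re - ξ₀.re| < δ :=
      lt_of_le_of_lt (by simpa using Complex.abs_re_le_norm (ξ - ξ₀)) hd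
    have h2 : δ ≤ ξ.re := by
      cases' abs_lt.mp h1 with hl hr
      rw [hδdef] at *
      linarith
    nlinarith
  have key := hasDerivAt_integral_of_dominated_loc_of_deriv_le (μ := volume.restrict (Ioi 1))
      (F := F) (F' := F') (x₀ := ξ₀)
      (bound := fun s => Real.exp (-δ*s) * s^2) (ball_mem_nhds ξ₀ hδ)
      ?_ ?_ ?_ ?_ (integrable_aux3 hδ) ?_
  · have hI : DifferentiableAt ℂ (fun ξ => ∫ s in Ioi (1:ℝ), F ξ s) ξ₀ :=
      key.2.differentiableAt
    have := differentiableAt_id.mul hI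
    unfold K1orig
    exact this
  · exact Eventually.of_forall (fun ξ => (hcont ξ).aestronglyMeasurable)
  · apply Integrable.mono' ((integrable_aux3 hδ).mono_set (subset_refl _))
      (hcont ξ₀).aestronglyMeasurable
    rw [ae_restrict_iff' measurableSet_Ioi]
    refine Eventually.of_forall (fun s hs => ?_)
    have hs : 1 < s := hs
    show _ ≤ Real.exp (-δ*s) * s^2
    rw [hnorm ξ₀ s hs]
    have h1 : Real.exp (-(ξ₀.re * s)) ≤ Real.exp (-δ*s) :=
      hexp_le ξ₀ (mem_ball_self hδ) s hs
    have h2 : Real.sqrt (s^2-1) ≤ s^2 := by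
      calc Real.sqrt (s^2-1) ≤ s := hsqrt_le s hs
        _ ≤ s^2 := by nlinarith
    exact mul_le_mul h1 h2 (Real.sqrt_nonneg _) (Real.exp_pos _).le
  · exact hcont'.aestronglyMeasurable
  · rw [ae_restrict_iff' measurableSet_Ioi]
    refine Eventually.of_forall (fun s hs ξ hξ => ?_)
    have hs : 1 < s := hs
    have hs0 : 0 < s := by linarith
    have h1 : ‖F' ξ s‖ = Real.exp (-(ξ.re * s)) * s * Real.sqrt (s^2-1) := by
      rw [hF'def]
      simp only [norm_mul, Complex.norm_exp, Complex.norm_real, Real.norm_eq_abs,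
        norm_neg, hre]
      rw [_root_.abs_of_nonneg (Real.sqrt_nonneg _), _root_.abs_of_pos hs0]
    show _ ≤ Real.exp (-δ*s) * s^2
    rw [h1]
    calc Real.exp (-(ξ.re * s)) * s * Real.sqrt (s^2-1)
        ≤ Real.exp (-δ*s) * s * s := by
          apply mul_le_mul (mul_le_mul (hexp_le ξ hξ s hs) le_rfl hs0.le (Real.exp_pos _).le)
            (hsqrt_le s hs) (Real.sqrt_nonneg _) (by positivity)
      _ = Real.exp (-δ*s) * s^2 := by ring
  · rw [ae_restrict_iff' measurableSet_Ioi]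
    refine Eventually.of_forall (fun s hs ξ hξ => ?_)
    have hd : HasDerivAt (fun ξ : ℂ => -ξ * (s:ℂ)) (-(s:ℂ)) ξ := by
      simpa using ((hasDerivAt_id ξ).neg.mul_const ((s:ℂ)))
    exact (hd.cexp).mul_const _

lemma K1_real_eq {x : ℝ} (hx : 0 < x) : K1cont (x:ℂ) = K1orig (x:ℂ) := by
  set g : ℝ → ℂ := fun t =>
    Complex.exp (-(t:ℂ)) * ((t:ℂ)^2 + 2*(x:ℂ)*(t:ℂ)) ^ ((1:ℂ)/2) with hg
  have himg : Ioi (0:ℝ) = (fun s => x*s - x) '' Ioi 1 := by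
    ext t
    simp only [mem_image, mem_Ioi]
    constructor
    · intro ht
      refine ⟨t/x + 1, by have := div_pos ht hx; linarith, ?_⟩
      field_simp
      ring
    · rintro ⟨s, hs, rfl⟩
      nlinarith
  have hderiv : ∀ s ∈ Ioi (1:ℝ), HasDerivWithinAt (fun s => x*s - x) x (Ioi 1) s := by
    intro s hs
    simpa using (((hasDerivAt_id s).const_mul x).sub_const x).hasDerivWithinAt
  have hinj : InjOn (fun s => x*s - x) (Ioi 1) := by
    intro a ha b hb hab
    simp only at hab
    have : x * a = x * b := by linarith
    exact mul_left_cancel₀ hx.ne' this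
  have hchange : (∫ t in Ioi (0:ℝ), g t) = ∫ s in Ioi (1:ℝ), |x| • g (x*s - x) := by
    rw [himg]
    exact integral_image_eq_integral_abs_deriv_smul measurableSet_Ioi hderiv hinj g
  have hpt : ∀ s ∈ Ioi (1:ℝ), |x| • g (x*s - x)
      = ((x:ℂ)^2 * Complex.exp (x:ℂ)) *
        (Complex.exp (-(x:ℂ) * (s:ℂ)) * ((Real.sqrt (s^2 - 1) : ℝ) : ℂ)) := by
    intro s hs
    have hs : 1 < s := hs
    have hbase : ((x*s - x : ℝ):ℂ)^2 + 2*(x:ℂ)*((x*s - x : ℝ):ℂ)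
        = ((x^2*(s^2-1) : ℝ) : ℂ) := by
      push_cast
      ring
    have hbnonneg : (0:ℝ) ≤ x^2*(s^2-1) := mul_nonneg (sq_nonneg x) (by nlinarith)
    have hsqrt : Real.sqrt (x^2*(s^2-1)) = x * Real.sqrt (s^2-1) := by
      rw [Real.sqrt_mul (sq_nonneg x), Real.sqrt_sq hx.le]
    have hexp : Complex.exp (-((x*s - x : ℝ):ℂ))
        = Complex.exp (x:ℂ) * Complex.exp (-(x:ℂ) * (s:ℂ)) := by
      rw [← Complex.exp_add]
      congr 1
      push_cast
      ring
    rw [hg]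
    simp only
    rw [hbase, ofReal_cpow_half hbnonneg, hsqrt, hexp, _root_.abs_of_pos hx]
    push_cast
    rw [Complex.real_smul]
    push_cast
    ring
  have hchange2 : (∫ t in Ioi (0:ℝ), g t)
      = ((x:ℂ)^2 * Complex.exp (x:ℂ)) *
        ∫ s in Ioi (1:ℝ), Complex.exp (-(x:ℂ) * (s:ℂ)) * ((Real.sqrt (s^2 - 1) : ℝ) : ℂ) := by
    rw [hchange, setIntegral_congr_fun measurableSet_Ioi hpt, integral_const_mul]
  have hx0 : (x:ℂ) ≠ 0 := by exact_mod_cast hx.ne'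
  unfold K1cont K1orig
  rw [show (∫ t in Ioi (0:ℝ), Complex.exp (-(t : ℂ)) *
      ((t : ℂ) ^ 2 + 2 * (x:ℂ) * t) ^ ((1 : ℂ) / 2)) = ∫ t in Ioi (0:ℝ), g t from rfl,
    hchange2, Complex.exp_neg]
  field_simp

end Auxiliary

section Main

open Set Metric Filter

/-- The formula `(e^{-ξ}/ξ) ∫₀^∞ e^{-t} √(t² + 2ξt) dt` defines an analytic function on
`ℂ \ ℝ≤0` which coincides with `K₁` on its original domain; i.e. the modified Bessel
function `K₁` satisfies this integral representation on all of `ℂ \ ℝ≤0`. -/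
theorem K1_integral_representation_on_slitPlane :
    AnalyticOnNhd ℂ K1cont Complex.slitPlane ∧
    ∀ ξ : ℂ, 0 < ξ.re → K1cont ξ = K1orig ξ := by
  have han : AnalyticOnNhd ℂ K1cont Complex.slitPlane := by
    apply DifferentiableOn.analyticOnNhd _ Complex.isOpen_slitPlane
    exact fun ξ hξ => (K1cont_diff hξ).differentiableWithinAt
  refine ⟨han, ?_⟩
  set U : Set ℂ := {z : ℂ | 0 < z.re} with hU
  have hUopen : IsOpen U := isOpen_lt continuous_const Complex.continuous_re
  have hUpre : IsPreconnected U := (convex_halfSpace_re_gt (0:ℝ)).isPreconnected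
  have hUsub : U ⊆ Complex.slitPlane := fun z hz => Or.inl hz
  have h1 : AnalyticOnNhd ℂ K1cont U := han.mono hUsub
  have h2 : AnalyticOnNhd ℂ K1orig U := by
    apply DifferentiableOn.analyticOnNhd _ hUopen
    exact fun ξ hξ => (K1orig_diff hξ).differentiableWithinAt
  have h1U : (1:ℂ) ∈ U := by simp [hU]
  have hfreq : ∃ᶠ z in nhdsWithin (1:ℂ) {(1:ℂ)}ᶜ, K1cont z = K1orig z := by
    have htend : Tendsto (fun n : ℕ => ((1 + 1/(n+1) : ℝ) : ℂ)) atTop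
        (nhdsWithin (1:ℂ) {(1:ℂ)}ᶜ) := by
      apply tendsto_nhdsWithin_of_tendsto_nhds_of_eventually_within
      · have : Tendsto (fun n : ℕ => (1 + 1/(n+1) : ℝ)) atTop (nhds 1) := by
          have h := tendsto_one_div_add_atTop_nhds_zero_nat (𝕜 := ℝ)
          have := h.const_add (1:ℝ)
          simpa using this
        have h2 := (Complex.continuous_ofReal.tendsto (1:ℝ)).comp this
        simpa only [Function.comp_def, Complex.ofReal_one] using h2
      · apply Eventually.of_forall
        intro n
        simp only [mem_compl_iff, mem_singleton_iff]
        intro hc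
        have : (1 + 1/(n+1) : ℝ) = 1 := by exact_mod_cast hc
        have hpos : (0:ℝ) < 1/(n+1) := by positivity
        linarith
    apply htend.frequently
    apply Frequently.of_forall
    intro n
    exact K1_real_eq (by positivity)
  have heq : EqOn K1cont K1orig U :=
    h1.eqOn_of_preconnected_of_frequently_eq h2 hUpre h1U hfreq
  exact fun ξ hξ => heq hξ

end Main
end

section
/- For all real ξ > 0 one has -d/dξ (K₁(ξ)/ξ) ≥ 2 e^{-ξ}/ξ³. -/
open MeasureTheory

open Real Set Filter Topology in
private lemma tendsto_pow_mul_exp_neg_mul (n : ℕ) {c : ℝ} (hc : 0 < c) :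
    Tendsto (fun s : ℝ => s ^ n * Real.exp (-c * s)) atTop (nhds 0) := by
  have h1 : Tendsto (fun s : ℝ => c * s) atTop atTop :=
    tendsto_id.const_mul_atTop hc
  have h2 := (tendsto_pow_mul_exp_neg_atTop_nhds_zero n).comp h1
  have h3 := h2.const_mul (1 / c ^ n)
  rw [mul_zero] at h3
  refine h3.congr fun s => ?_
  simp only [Function.comp]
  rw [mul_pow]
  field_simp

open Real Set Filter Topology in
private lemma integrableOn_sq_exp {c : ℝ} (hc : 0 < c) :
    IntegrableOn (fun s : ℝ => s ^ 2 * Real.exp (-c * s)) (Set.Ioi 1) := by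
  apply integrable_of_isBigO_exp_neg (half_pos hc)
  · exact (continuous_pow 2).continuousOn.mul
      ((Real.continuous_exp.comp (continuous_const.mul continuous_id)).continuousOn)
  · have ht : Tendsto (fun s : ℝ => s ^ 2 * Real.exp (-(c / 2) * s)) atTop (nhds 0) :=
      tendsto_pow_mul_exp_neg_mul 2 (half_pos hc)
    have : (fun s : ℝ => s ^ 2 * Real.exp (-c * s)) =ᶠ[atTop]
        fun s => (s ^ 2 * Real.exp (-(c / 2) * s)) * Real.exp (-(c / 2) * s) := by
      filter_upwards with s
      rw [mul_assoc, ← Real.exp_add]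
      ring_nf
    have hb : (fun s : ℝ => s ^ 2 * Real.exp (-(c / 2) * s)) =O[atTop] (fun _ => (1 : ℝ)) :=
      ht.isBigO_one ℝ
    have := (hb.mul (Asymptotics.isBigO_refl (fun s : ℝ => Real.exp (-(c / 2) * s)) atTop))
    simp only [one_mul] at this
    calc (fun s : ℝ => s ^ 2 * Real.exp (-c * s))
        =ᶠ[atTop] fun s => (s ^ 2 * Real.exp (-(c / 2) * s)) * Real.exp (-(c / 2) * s) := ‹_›
      _ =O[atTop] fun s => Real.exp (-(c / 2) * s) := this

/-- The modified Bessel function of the second kind of order one, for real `ξ > 0`: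
`K₁(ξ) = ξ ∫₁^∞ e^{-ξ s} √(s² - 1) ds`. -/
noncomputable def K1real (ξ : ℝ) : ℝ :=
  ξ * ∫ s in Set.Ioi (1 : ℝ), Real.exp (-ξ * s) * Real.sqrt (s ^ 2 - 1)

open Real Set Filter Topology in
private lemma sqrt_sq_sub_one_le {s : ℝ} (hs : 1 < s) : Real.sqrt (s ^ 2 - 1) ≤ s := by
  have h := Real.sqrt_le_sqrt (show s ^ 2 - 1 ≤ s ^ 2 by linarith)
  rwa [Real.sqrt_sq (by linarith)] at h

open Real Set Filter Topology in
private lemma intF {c : ℝ} (hc : 0 < c) :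
    IntegrableOn (fun s : ℝ => Real.exp (-c * s) * Real.sqrt (s ^ 2 - 1)) (Set.Ioi 1) := by
  apply (integrableOn_sq_exp hc).mono'
  · exact ((Real.continuous_exp.comp (continuous_const.mul continuous_id)).mul
      (Real.continuous_sqrt.comp (by continuity))).aestronglyMeasurable
  · rw [ae_restrict_iff' measurableSet_Ioi]
    filter_upwards with s hs
    have hs' : (1:ℝ) < s := hs
    have h1 := sqrt_sq_sub_one_le hs'
    have h2 := Real.exp_pos (-c * s)
    have h3 := Real.sqrt_nonneg (s ^ 2 - 1)
    rw [Real.norm_eq_abs, abs_of_nonneg (mul_nonneg h2.le h3)]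
    nlinarith [mul_le_mul_of_nonneg_left h1 h2.le, mul_pos h2 (sub_pos.2 hs')]

open Real Set Filter Topology in
private lemma intF' {c : ℝ} (hc : 0 < c) :
    IntegrableOn (fun s : ℝ => s * (Real.exp (-c * s) * Real.sqrt (s ^ 2 - 1)))
      (Set.Ioi 1) := by
  apply (integrableOn_sq_exp hc).mono'
  · exact (continuous_id.mul ((Real.continuous_exp.comp (continuous_const.mul continuous_id)).mul
      (Real.continuous_sqrt.comp (by continuity)))).aestronglyMeasurable
  · rw [ae_restrict_iff' measurableSet_Ioi]
    filter_upwards with s hs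
    have hs' : (1:ℝ) < s := hs
    have h1 := sqrt_sq_sub_one_le hs'
    have h2 := Real.exp_pos (-c * s)
    have h3 := Real.sqrt_nonneg (s ^ 2 - 1)
    rw [Real.norm_eq_abs, abs_of_nonneg (by positivity)]
    have ha : Real.exp (-c * s) * Real.sqrt (s ^ 2 - 1) ≤ Real.exp (-c * s) * s :=
      mul_le_mul_of_nonneg_left h1 h2.le
    nlinarith [mul_le_mul_of_nonneg_left ha (show (0:ℝ) ≤ s by linarith)]

open Real Set Filter Topology in
private lemma intG {c : ℝ} (hc : 0 < c) :
    IntegrableOn (fun s : ℝ => Real.exp (-c * s) * (s - 1) ^ 2) (Set.Ioi 1) := by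
  apply (integrableOn_sq_exp hc).mono'
  · exact ((Real.continuous_exp.comp (continuous_const.mul continuous_id)).mul
      (by continuity)).aestronglyMeasurable
  · rw [ae_restrict_iff' measurableSet_Ioi]
    filter_upwards with s hs
    have hs' : (1:ℝ) < s := hs
    have h2 := Real.exp_pos (-c * s)
    rw [Real.norm_eq_abs, abs_of_nonneg (by positivity)]
    nlinarith

open Real Set Filter Topology in
private lemma hasDeriv_I (ξ : ℝ) (hξ : 0 < ξ) :
    HasDerivAt (fun x : ℝ => ∫ s in Set.Ioi (1:ℝ), Real.exp (-x * s) * Real.sqrt (s ^ 2 - 1))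
      (∫ s in Set.Ioi (1:ℝ), -(s * (Real.exp (-ξ * s) * Real.sqrt (s ^ 2 - 1)))) ξ := by
  have key := hasDerivAt_integral_of_dominated_loc_of_deriv_le
    (μ := volume.restrict (Set.Ioi (1:ℝ)))
    (F := fun x s => Real.exp (-x * s) * Real.sqrt (s ^ 2 - 1))
    (F' := fun x s => -(s * (Real.exp (-x * s) * Real.sqrt (s ^ 2 - 1))))
    (bound := fun s => s ^ 2 * Real.exp (-(ξ/2) * s))
    (Metric.ball_mem_nhds ξ (half_pos hξ))
    (Filter.Eventually.of_forall fun x =>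
      ((Real.continuous_exp.comp (continuous_const.mul continuous_id)).mul
        (Real.continuous_sqrt.comp (by continuity))).aestronglyMeasurable)
    (intF hξ)
    ((continuous_id.mul ((Real.continuous_exp.comp (continuous_const.mul continuous_id)).mul
        (Real.continuous_sqrt.comp (by continuity)))).neg.aestronglyMeasurable)
    ?_ (integrableOn_sq_exp (half_pos hξ)) ?_
  · exact key.2
  · rw [ae_restrict_iff' measurableSet_Ioi]
    filter_upwards with s hs x hx
    have hs' : (1:ℝ) < s := hs
    rw [Metric.mem_ball, Real.dist_eq, abs_lt] at hx
    have hx2 : ξ/2 ≤ x := by linarith [hx.1]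
    have hexp : Real.exp (-x * s) ≤ Real.exp (-(ξ/2) * s) := by
      apply Real.exp_le_exp.2
      nlinarith
    have h1 := sqrt_sq_sub_one_le hs'
    have h2 := Real.exp_pos (-x * s)
    have h3 := Real.sqrt_nonneg (s ^ 2 - 1)
    have h4 := Real.exp_pos (-(ξ/2) * s)
    rw [norm_neg, Real.norm_eq_abs, abs_of_nonneg (by positivity)]
    calc s * (Real.exp (-x * s) * Real.sqrt (s ^ 2 - 1))
        ≤ s * (Real.exp (-x * s) * s) := by
          exact mul_le_mul_of_nonneg_left (mul_le_mul_of_nonneg_left h1 h2.le)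
            (show (0:ℝ) ≤ s by linarith)
      _ ≤ s * (Real.exp (-(ξ/2) * s) * s) := by nlinarith
      _ = s ^ 2 * Real.exp (-(ξ/2) * s) := by ring
  · rw [ae_restrict_iff' measurableSet_Ioi]
    filter_upwards with s hs x hx
    have h1 : HasDerivAt (fun x : ℝ => -x * s) (-s) x := by
      simpa using ((hasDerivAt_id x).neg.mul_const s)
    have h2 := (h1.exp).mul_const (Real.sqrt (s ^ 2 - 1))
    refine h2.congr_deriv ?_
    ring

open Real Set Filter Topology in
private lemma integral_exp_sub_one_sq (ξ : ℝ) (hξ : 0 < ξ) :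
    ∫ s in Set.Ioi (1:ℝ), Real.exp (-ξ * s) * (s - 1) ^ 2 = 2 * Real.exp (-ξ) / ξ ^ 3 := by
  set F : ℝ → ℝ := fun s =>
    -Real.exp (-ξ * s) * ((s - 1) ^ 2 / ξ + 2 * (s - 1) / ξ ^ 2 + 2 / ξ ^ 3) with hF
  have hderiv : ∀ s ∈ Set.Ioi (1:ℝ),
      HasDerivAt F (Real.exp (-ξ * s) * (s - 1) ^ 2) s := by
    intro s _
    have h1 : HasDerivAt (fun s : ℝ => -ξ * s) (-ξ) s := by
      simpa using (hasDerivAt_id s).const_mul (-ξ)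
    have h2 := h1.exp.neg
    have h3 : HasDerivAt (fun s : ℝ => (s - 1) ^ 2 / ξ + 2 * (s - 1) / ξ ^ 2 + 2 / ξ ^ 3)
        (2 * (s - 1) / ξ + 2 / ξ ^ 2) s := by
      have ha := (((hasDerivAt_id s).sub_const 1).pow 2).div_const ξ
      have hb := (((hasDerivAt_id s).sub_const 1).const_mul 2).div_const (ξ ^ 2)
      have := (ha.add hb).add_const (2 / ξ ^ 3)
      refine this.congr_deriv ?_
      simp
    have := h2.mul h3
    refine this.congr_deriv ?_
    simp only [Pi.neg_apply]
    field_simp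
    ring
  have hcont : ContinuousWithinAt F (Set.Ici 1) 1 := by
    apply Continuous.continuousWithinAt
    continuity
  have htend : Tendsto F atTop (nhds 0) := by
    have hrw : F = fun s => (-1/ξ) * (s ^ 2 * Real.exp (-ξ * s))
        + (2/ξ - 2/ξ^2) * (s ^ 1 * Real.exp (-ξ * s))
        + (-1/ξ + 2/ξ^2 - 2/ξ^3) * (s ^ 0 * Real.exp (-ξ * s)) := by
      funext s
      rw [hF]
      field_simp
      ring
    rw [hrw]
    have h2 := (tendsto_pow_mul_exp_neg_mul 2 hξ).const_mul (-1/ξ)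
    have h1 := (tendsto_pow_mul_exp_neg_mul 1 hξ).const_mul (2/ξ - 2/ξ^2)
    have h0 := (tendsto_pow_mul_exp_neg_mul 0 hξ).const_mul (-1/ξ + 2/ξ^2 - 2/ξ^3)
    simpa using (h2.add h1).add h0
  have := integral_Ioi_of_hasDerivAt_of_tendsto hcont hderiv (intG hξ) htend
  rw [this, hF]
  simp
  field_simp

/-- For all real `ξ > 0`, one has `-d/dξ (K₁(ξ)/ξ) ≥ 2 e^{-ξ}/ξ³`. -/
theorem neg_deriv_K1real_div_lower_bound (ξ : ℝ) (hξ : 0 < ξ) :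
    2 * Real.exp (-ξ) / ξ ^ 3 ≤ -deriv (fun x : ℝ => K1real x / x) ξ := by
  have hev : (fun x : ℝ => K1real x / x) =ᶠ[nhds ξ]
      fun x : ℝ => ∫ s in Set.Ioi (1:ℝ), Real.exp (-x * s) * Real.sqrt (s ^ 2 - 1) := by
    filter_upwards [eventually_ne_nhds hξ.ne'] with x hx
    unfold K1real
    rw [mul_comm, mul_div_assoc, div_self hx, mul_one]
  rw [Filter.EventuallyEq.deriv_eq hev, (hasDeriv_I ξ hξ).deriv, integral_neg, neg_neg,
    ← integral_exp_sub_one_sq ξ hξ]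
  apply setIntegral_mono_on (intG hξ) (intF' hξ) measurableSet_Ioi
  intro s hs
  have hs' : (1:ℝ) < s := hs
  have key : (s - 1) ^ 2 ≤ s * Real.sqrt (s ^ 2 - 1) := by
    have hrw : s * Real.sqrt (s ^ 2 - 1) = Real.sqrt (s ^ 2 * (s ^ 2 - 1)) := by
      rw [Real.sqrt_mul (sq_nonneg s), Real.sqrt_sq (by linarith)]
    rw [hrw]
    rw [show ((s-1)^2 : ℝ) = Real.sqrt (((s-1)^2)^2) from (Real.sqrt_sq (sq_nonneg _)).symm]
    apply Real.sqrt_le_sqrt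
    nlinarith
  have h2 := Real.exp_pos (-ξ * s)
  nlinarith
end

section
/- With D as above satisfying (□ + m²)D = 0 and the Lorentz symmetry w_ν∂_μD = w_μ∂_νD, one has, for all w in the domain of r and μ ∈ {0,1,2,3}: ∂_μ[r(w)² γ^ν ∂_ν D(w)] = 2 w_μ γ^ν ∂_ν D(w) - γ_μ w^ν ∂_ν D(w) + (γ^ν w_ν) w_μ m² D(w), where γ^μ are Dirac matrices satisfying {γ^μ, γ^ν} = 2 g^{μν}·1. -/
open Complex

/-- Minkowski quadratic form `w_μ w^μ` on `ℂ⁴`, metric `diag(1,-1,-1,-1)`. -/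
noncomputable def minkC (w : Fin 4 → ℂ) : ℂ :=
  w 0 ^ 2 - w 1 ^ 2 - w 2 ^ 2 - w 3 ^ 2

/-- Partial derivative `∂_μ = ∂/∂w^μ`. -/
noncomputable def pd (μ : Fin 4) (f : (Fin 4 → ℂ) → ℂ) (w : Fin 4 → ℂ) : ℂ :=
  deriv (fun s : ℂ => f (Function.update w μ s)) (w μ)

/-- Diagonal entries of the Minkowski metric `diag(1,-1,-1,-1)`. -/
def etaC (μ : Fin 4) : ℂ := if μ = 0 then 1 else -1

/-- The Minkowski metric `g^{μν} = diag(1,-1,-1,-1)`. -/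
def gC (μ ν : Fin 4) : ℂ := if μ = ν then etaC μ else 0

/-- The domain `{w ∈ ℂ⁴ : -w_μw^μ ∈ ℂ \ ℝ≤0}` of `r`. -/
def rDomain : Set (Fin 4 → ℂ) := {w | -minkC w ∈ Complex.slitPlane}

lemma pd_hasDerivAt (g : (Fin 4 → ℂ) → ℂ) (w : Fin 4 → ℂ) (μ : Fin 4)
    (hg : DifferentiableAt ℂ g w) :
    HasDerivAt (fun s => g (Function.update w μ s)) (fderiv ℂ g w (Pi.single μ 1)) (w μ) := by
  have h : HasFDerivAt g (fderiv ℂ g w) (Function.update w μ (w μ)) := by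
    rw [Function.update_eq_self]; exact hg.hasFDerivAt
  exact h.comp_hasDerivAt (w μ) (hasDerivAt_update w μ (w μ))

lemma pd_eq_fderiv (g : (Fin 4 → ℂ) → ℂ) (w : Fin 4 → ℂ) (μ : Fin 4)
    (hg : DifferentiableAt ℂ g w) :
    pd μ g w = fderiv ℂ g w (Pi.single μ 1) :=
  (pd_hasDerivAt g w μ hg).deriv

lemma pd_congr {f g : (Fin 4 → ℂ) → ℂ} {w : Fin 4 → ℂ} (μ : Fin 4)
    (h : f =ᶠ[nhds w] g) : pd μ f w = pd μ g w := by
  unfold pd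
  apply Filter.EventuallyEq.deriv_eq
  have hc : Filter.Tendsto (fun s : ℂ => Function.update w μ s) (nhds (w μ)) (nhds w) := by
    have hcont : Continuous (fun s : ℂ => Function.update w μ s) :=
      continuous_const.update μ continuous_id
    simpa [Function.update_eq_self] using hcont.tendsto (w μ)
  exact h.comp_tendsto hc

lemma rDomain_isOpen : IsOpen rDomain := by
  have : Continuous fun w : Fin 4 → ℂ => -minkC w := by
    unfold minkC; fun_prop
  exact isOpen_slitPlane.preimage this

lemma key_fderiv (c : ℂ) (β : Fin 4) (G : (Fin 4 → ℂ) → ℂ) (w : Fin 4 → ℂ)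
    (hG : DifferentiableAt ℂ G w) :
    HasFDerivAt (fun v => c * v β * G v)
      ((c * w β) • fderiv ℂ G w
        + (G w) • (c • (ContinuousLinearMap.proj β : (Fin 4 → ℂ) →L[ℂ] ℂ))) w :=
  (((ContinuousLinearMap.proj β : (Fin 4 → ℂ) →L[ℂ] ℂ).hasFDerivAt.const_mul c).mul
    hG.hasFDerivAt)

lemma key_fderiv_apply (c : ℂ) (β : Fin 4) (G : (Fin 4 → ℂ) → ℂ) (w : Fin 4 → ℂ)
    (hG : DifferentiableAt ℂ G w) (lam : Fin 4) :
    fderiv ℂ (fun v => c * v β * G v) w (Pi.single lam 1)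
      = c * w β * fderiv ℂ G w (Pi.single lam 1)
        + G w * (c * (if β = lam then 1 else 0)) := by
  rw [(key_fderiv c β G w hG).fderiv]
  simp [ContinuousLinearMap.proj, Pi.single_apply, smul_eq_mul]

lemma fin4_cases : ∀ x : Fin 4, x = 0 ∨ x = 1 ∨ x = 2 ∨ x = 3 := by decide

lemma etaC_0 : etaC 0 = 1 := rfl
lemma etaC_1 : etaC 1 = -1 := rfl
lemma etaC_2 : etaC 2 = -1 := rfl
lemma etaC_3 : etaC 3 = -1 := rfl

/-- With `D` twice differentiable on the domain of `r`, satisfying the Klein–Gordon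
equation `(□ + m²)D = 0` and the Lorentz symmetry `w_ν∂_μD = w_μ∂_νD` there, and with
Dirac matrices `γ^μ` satisfying `{γ^μ, γ^ν} = 2g^{μν}·1`, one has for all `w` in the
domain of `r` and all `μ`:
`∂_μ[r(w)² γ^ν∂_νD(w)] = 2 w_μ γ^ν∂_νD(w) - γ_μ w^ν∂_νD(w) + w̸ w_μ m² D(w)`,
where `r(w)² = -w_νw^ν`, `w_μ = η_μ w^μ`, `γ_μ = η_μ γ^μ`, `w̸ = γ^ν w_ν`. -/
theorem deriv_r2_slash_partial_D (m : ℝ)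
    (γ : Fin 4 → Matrix (Fin 4) (Fin 4) ℂ)
    (hγ : ∀ μ ν, γ μ * γ ν + γ ν * γ μ = (2 * gC μ ν) • (1 : Matrix (Fin 4) (Fin 4) ℂ))
    (D : (Fin 4 → ℂ) → ℂ)
    (hD : ContDiffOn ℂ 2 D rDomain)
    (hKG : ∀ w ∈ rDomain,
      pd 0 (pd 0 D) w - pd 1 (pd 1 D) w - pd 2 (pd 2 D) w - pd 3 (pd 3 D) w
        + (m : ℂ) ^ 2 * D w = 0)
    (hLor : ∀ w ∈ rDomain, ∀ μ ν : Fin 4,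
      etaC ν * w ν * pd μ D w = etaC μ * w μ * pd ν D w)
    (w : Fin 4 → ℂ) (hw : w ∈ rDomain) (μ : Fin 4) :
    ∑ ν : Fin 4, pd μ (fun v => (-minkC v) * pd ν D v) w • γ ν
      = (2 * (etaC μ * w μ)) • (∑ ν : Fin 4, pd ν D w • γ ν)
        - (∑ ν : Fin 4, w ν * pd ν D w) • (etaC μ • γ μ)
        + ((etaC μ * w μ) * (m : ℂ) ^ 2 * D w) • (∑ ν : Fin 4, (etaC ν * w ν) • γ ν) := by
  classical
  have hU : IsOpen rDomain := rDomain_isOpen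
  have hmem : rDomain ∈ nhds w := hU.mem_nhds hw
  have hDd : ∀ v ∈ rDomain, DifferentiableAt ℂ D v := fun v hv =>
    (hD.contDiffAt (hU.mem_nhds hv)).differentiableAt (by norm_num)
  set F : Fin 4 → (Fin 4 → ℂ) → ℂ := fun ν v => fderiv ℂ D v (Pi.single ν 1) with hFdef
  have hF : ∀ v ∈ rDomain, ∀ ν, pd ν D v = F ν v := fun v hv ν =>
    pd_eq_fderiv D v ν (hDd v hv)
  have hD2 : ContDiffAt ℂ 2 D w := hD.contDiffAt hmem
  have hfd : DifferentiableAt ℂ (fderiv ℂ D) w := by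
    have h := hD2.fderiv_right (m := 1) (by norm_num)
    exact h.differentiableAt one_ne_zero
  have hFd : ∀ ν, DifferentiableAt ℂ (F ν) w := fun ν =>
    hfd.clm_apply (differentiableAt_const _)
  set P : Fin 4 → Fin 4 → ℂ :=
    fun lam ν => fderiv ℂ (fderiv ℂ D) w (Pi.single lam 1) (Pi.single ν 1) with hPdef
  have hΦ : ∀ lam ν, fderiv ℂ (F ν) w (Pi.single lam 1) = P lam ν := by
    intro lam ν
    rw [hFdef]
    rw [fderiv_clm_apply hfd (differentiableAt_const _)]
    simp [hPdef]
  have hsymm : ∀ lam ν, P lam ν = P ν lam := fun lam ν =>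
    (hD2.isSymmSndFDerivAt (by simp)) _ _
  have hpdF : ∀ κ : Fin 4, (pd κ D) =ᶠ[nhds w] F κ :=
    fun κ => Filter.eventuallyEq_of_mem hmem (fun v hv => hF v hv κ)
  have hpd2 : ∀ κ lam : Fin 4, pd lam (pd κ D) w = P lam κ := by
    intro κ lam
    rw [pd_congr lam (hpdF κ), pd_eq_fderiv _ _ _ (hFd κ), hΦ]
  have hKG' : P 0 0 - P 1 1 - P 2 2 - P 3 3 + (m : ℂ) ^ 2 * D w = 0 := by
    have h := hKG w hw
    rwa [hpd2 0 0, hpd2 1 1, hpd2 2 2, hpd2 3 3] at h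
  have hLw : ∀ α β : Fin 4, etaC β * w β * F α w = etaC α * w α * F β w := by
    intro α β
    have h := hLor w hw α β
    rwa [hF w hw α, hF w hw β] at h
  -- differentiated Lorentz relation
  have E : ∀ α β lam : Fin 4,
      etaC β * w β * P lam α + F α w * (etaC β * (if β = lam then 1 else 0))
        = etaC α * w α * P lam β + F β w * (etaC α * (if α = lam then 1 else 0)) := by
    intro α β lam
    have hfe : (fun v => etaC β * v β * F α v) =ᶠ[nhds w]
        (fun v => etaC α * v α * F β v) := by
      apply Filter.eventuallyEq_of_mem hmem
      intro v hv
      have h := hLor v hv α β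
      rwa [hF v hv α, hF v hv β] at h
    have h : fderiv ℂ (fun v => etaC β * v β * F α v) w
        = fderiv ℂ (fun v => etaC α * v α * F β v) w := hfe.fderiv_eq
    have h1 := key_fderiv_apply (etaC β) β (F α) w (hFd α) lam
    have h2 := key_fderiv_apply (etaC α) α (F β) w (hFd β) lam
    rw [hΦ lam α] at h1
    rw [hΦ lam β] at h2
    rw [← h1, ← h2, h]
  have hA : ∀ μ' : Fin 4,
      w 0 * P 0 μ' + w 1 * P 1 μ' + w 2 * P 2 μ' + w 3 * P 3 μ'
        = -3 * F μ' w - etaC μ' * w μ' * ((m : ℂ) ^ 2 * D w) := by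
    intro μ'
    have e0 := E μ' 0 0
    have e1 := E μ' 1 1
    have e2 := E μ' 2 2
    have e3 := E μ' 3 3
    rcases fin4_cases μ' with rfl | rfl | rfl | rfl
    · simp only [etaC_0, etaC_1, etaC_2, etaC_3, Fin.reduceEq, reduceIte] at e1 e2 e3 ⊢
      linear_combination (-e1) - e2 - e3 + w 0 * hKG'
    · simp only [etaC_0, etaC_1, etaC_2, etaC_3, Fin.reduceEq, reduceIte] at e0 e2 e3 ⊢
      linear_combination e0 - e2 - e3 - w 1 * hKG'
    · simp only [etaC_0, etaC_1, etaC_2, etaC_3, Fin.reduceEq, reduceIte] at e0 e1 e3 ⊢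
      linear_combination e0 - e1 - e3 - w 2 * hKG'
    · simp only [etaC_0, etaC_1, etaC_2, etaC_3, Fin.reduceEq, reduceIte] at e0 e1 e2 ⊢
      linear_combination e0 - e1 - e2 - w 3 * hKG'
  -- the function S(v) = ∑ v_λ ∂_λ D(v)
  set Sf : (Fin 4 → ℂ) → ℂ :=
    fun v => v 0 * F 0 v + v 1 * F 1 v + v 2 * F 2 v + v 3 * F 3 v with hSfdef
  have hterm : ∀ lam : Fin 4, HasFDerivAt (fun v : Fin 4 → ℂ => v lam * F lam v)
      ((w lam) • fderiv ℂ (F lam) w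
        + (F lam w) • (ContinuousLinearMap.proj lam : (Fin 4 → ℂ) →L[ℂ] ℂ)) w :=
    fun lam => (ContinuousLinearMap.proj lam :
      (Fin 4 → ℂ) →L[ℂ] ℂ).hasFDerivAt.mul (hFd lam).hasFDerivAt
  have hSf : HasFDerivAt Sf
      ((w 0 • fderiv ℂ (F 0) w
          + F 0 w • (ContinuousLinearMap.proj 0 : (Fin 4 → ℂ) →L[ℂ] ℂ))
        + (w 1 • fderiv ℂ (F 1) w
          + F 1 w • (ContinuousLinearMap.proj 1 : (Fin 4 → ℂ) →L[ℂ] ℂ))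
        + (w 2 • fderiv ℂ (F 2) w
          + F 2 w • (ContinuousLinearMap.proj 2 : (Fin 4 → ℂ) →L[ℂ] ℂ))
        + (w 3 • fderiv ℂ (F 3) w
          + F 3 w • (ContinuousLinearMap.proj 3 : (Fin 4 → ℂ) →L[ℂ] ℂ))) w := by
    exact (((hterm 0).add (hterm 1)).add (hterm 2)).add (hterm 3)
  have hSfd : DifferentiableAt ℂ Sf w := hSf.differentiableAt
  have hdS : ∀ μ' : Fin 4, fderiv ℂ Sf w (Pi.single μ' 1)
      = -2 * F μ' w - etaC μ' * w μ' * ((m : ℂ) ^ 2 * D w) := by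
    intro μ'
    rw [hSf.fderiv]
    simp only [ContinuousLinearMap.add_apply, ContinuousLinearMap.smul_apply,
      ContinuousLinearMap.proj_apply, smul_eq_mul, hΦ, Pi.single_apply]
    have s0 := hsymm μ' 0
    have s1 := hsymm μ' 1
    have s2 := hsymm μ' 2
    have s3 := hsymm μ' 3
    have hA' := hA μ'
    rcases fin4_cases μ' with rfl | rfl | rfl | rfl <;>
      simp only [Fin.reduceEq, reduceIte] <;>
      linear_combination hA' + w 0 * s0 + w 1 * s1 + w 2 * s2 + w 3 * s3
  have hstep1 : ∀ ν : Fin 4, (fun v => -minkC v * pd ν D v) =ᶠ[nhds w]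
      (fun v => -etaC ν * v ν * Sf v) := by
    intro ν
    apply Filter.eventuallyEq_of_mem hmem
    intro v hv
    have l0 := hLor v hv ν 0
    have l1 := hLor v hv ν 1
    have l2 := hLor v hv ν 2
    have l3 := hLor v hv ν 3
    rw [hF v hv ν, hF v hv 0] at l0
    rw [hF v hv ν, hF v hv 1] at l1
    rw [hF v hv ν, hF v hv 2] at l2
    rw [hF v hv ν, hF v hv 3] at l3
    simp only [etaC_0, etaC_1, etaC_2, etaC_3] at l0 l1 l2 l3
    show -minkC v * pd ν D v = -etaC ν * v ν * Sf v
    rw [hF v hv ν, hSfdef]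
    simp only [minkC]
    linear_combination (-(v 0)) * l0 + (-(v 1)) * l1 + (-(v 2)) * l2 + (-(v 3)) * l3
  have hC : ∀ ν : Fin 4, pd μ (fun v => -minkC v * pd ν D v) w
      = 2 * (etaC μ * w μ) * F ν w
        - (if ν = μ then etaC μ * Sf w else 0)
        + (etaC ν * w ν) * (etaC μ * w μ) * ((m : ℂ) ^ 2 * D w) := by
    intro ν
    rw [pd_congr μ (hstep1 ν)]
    rw [pd_eq_fderiv _ _ _ (key_fderiv (-etaC ν) ν Sf w hSfd).differentiableAt]
    rw [key_fderiv_apply (-etaC ν) ν Sf w hSfd μ]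
    rw [hdS μ]
    have hl := hLw μ ν
    rcases eq_or_ne ν μ with h | h
    · subst h
      rw [if_pos rfl, if_pos rfl]
      ring
    · rw [if_neg h, if_neg h]
      linear_combination 2 * hl
  have hFw : ∀ ν, pd ν D w = F ν w := fun ν => hF w hw ν
  simp only [Fin.sum_univ_four]
  rw [hC 0, hC 1, hC 2, hC 3, hFw 0, hFw 1, hFw 2, hFw 3]
  have hSsum : w 0 * F 0 w + w 1 * F 1 w + w 2 * F 2 w + w 3 * F 3 w = Sf w := rfl
  rw [hSsum]
  rcases fin4_cases μ with rfl | rfl | rfl | rfl <;>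
    simp only [Fin.reduceEq, reduceIte] <;>
    module
end

section
/- Let H be a Hilbert space, Q : H → H a bounded skew-adjoint operator with Q² Hilbert–Schmidt, and P an orthogonal projection on H with [the commutation structure] PQP = 0 and (1-P)Q(1-P) = 0 (i.e. Q is off-diagonal with respect to ran P ⊕ ker P). Then e^Q P e^{-Q} - (P + QP - PQ) is a Hilbert–Schmidt operator; in particular e^Q P e^{-Q} - (1+Q)P(1-Q) is Hilbert–Schmidt. -/
open ContinuousLinearMap

/-- A Hilbert–Schmidt operator: `Σᵢ ‖T eᵢ‖² < ∞` for a Hilbert basis `(eᵢ)`. -/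
def IsHilbertSchmidt {H : Type} [NormedAddCommGroup H] [InnerProductSpace ℂ H]
    [CompleteSpace H] (T : H →L[ℂ] H) : Prop :=
  ∃ (ι : Type) (b : HilbertBasis ι ℂ H), Summable fun i => ‖T (b i)‖ ^ 2

section aux
variable {H : Type} [NormedAddCommGroup H] [InnerProductSpace ℂ H] [CompleteSpace H]

local notation "⟪" x ", " y "⟫" => @inner ℂ _ _ x y

lemma my_parseval {ι : Type} (b : HilbertBasis ι ℂ H) (x : H) :
    HasSum (fun i => ‖⟪b i, x⟫‖ ^ 2) (‖x‖ ^ 2) := by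
  have h := b.hasSum_inner_mul_inner x x
  have h2 := (Complex.reCLM : ℂ →L[ℝ] ℝ).hasSum h
  have e1 : (fun i => Complex.reCLM (⟪x, b i⟫ * ⟪b i, x⟫)) = fun i => ‖⟪b i, x⟫‖ ^ 2 := by
    funext i
    have hc : ⟪x, b i⟫ = starRingEnd ℂ ⟪b i, x⟫ := (inner_conj_symm _ _).symm
    rw [Complex.reCLM_apply, hc, mul_comm, Complex.mul_conj]
    rw [Complex.ofReal_re, Complex.normSq_eq_norm_sq]
  have e2 : Complex.reCLM ⟪x, x⟫ = ‖x‖ ^ 2 := by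
    exact (norm_sq_eq_re_inner (𝕜 := ℂ) x).symm
  rw [e1, e2] at h2
  exact h2

end aux

set_option linter.unusedSectionVars false

section aux2
variable {H : Type} [NormedAddCommGroup H] [InnerProductSpace ℂ H] [CompleteSpace H]

local notation "⟪" x ", " y "⟫" => @inner ℂ _ _ x y

/-- Key step: if `Σ ‖T bᵢ‖²` converges for one basis, then `Σ ‖T† cⱼ‖²` converges for any. -/
lemma adjoint_summable {T : H →L[ℂ] H} {ι κ : Type} (b : HilbertBasis ι ℂ H)
    (hb : Summable fun i => ‖T (b i)‖ ^ 2) (c : HilbertBasis κ ℂ H) :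
    Summable fun j => ‖(ContinuousLinearMap.adjoint T) (c j)‖ ^ 2 := by
  have key : Summable (fun p : ι × κ => ‖⟪c p.2, T (b p.1)⟫‖ ^ 2) := by
    refine (summable_prod_of_nonneg (fun p => sq_nonneg _)).2 ⟨fun i => (my_parseval c (T (b i))).summable, ?_⟩
    refine hb.congr fun i => ?_
    exact ((my_parseval c (T (b i))).tsum_eq).symm
  have key2 : Summable (fun p : κ × ι => ‖⟪c p.1, T (b p.2)⟫‖ ^ 2) := key.prod_symm
  have h3 := (summable_prod_of_nonneg (fun p : κ × ι => sq_nonneg _)).1 key2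
  refine h3.2.congr fun j => ?_
  have he : ∀ i : ι, ‖⟪c j, T (b i)⟫‖ ^ 2
      = ‖⟪b i, (ContinuousLinearMap.adjoint T) (c j)⟫‖ ^ 2 := by
    intro i
    have : ⟪b i, (ContinuousLinearMap.adjoint T) (c j)⟫
        = starRingEnd ℂ ⟪(ContinuousLinearMap.adjoint T) (c j), b i⟫ := (inner_conj_symm _ _).symm
    rw [this, ContinuousLinearMap.adjoint_inner_left, RCLike.norm_conj]
  calc (∑' i, ‖⟪c j, T (b i)⟫‖ ^ 2)
      = ∑' i, ‖⟪b i, (ContinuousLinearMap.adjoint T) (c j)⟫‖ ^ 2 := by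
        exact tsum_congr he
    _ = ‖(ContinuousLinearMap.adjoint T) (c j)‖ ^ 2 :=
        (my_parseval b ((ContinuousLinearMap.adjoint T) (c j))).tsum_eq

/-- Hilbert–Schmidt w.r.t. every basis. -/
lemma hs_all_bases {T : H →L[ℂ] H} (hT : IsHilbertSchmidt T) {κ : Type}
    (c : HilbertBasis κ ℂ H) : Summable fun j => ‖T (c j)‖ ^ 2 := by
  obtain ⟨ι, b, hb⟩ := hT
  have h1 := adjoint_summable b hb b
  have h2 := adjoint_summable b h1 c
  rw [ContinuousLinearMap.adjoint_adjoint] at h2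
  exact h2

lemma hs_adjoint {T : H →L[ℂ] H} (hT : IsHilbertSchmidt T) :
    IsHilbertSchmidt (ContinuousLinearMap.adjoint T) := by
  obtain ⟨ι, b, hb⟩ := hT
  exact ⟨ι, b, adjoint_summable b hb b⟩

lemma hs_mul_left (A : H →L[ℂ] H) {T : H →L[ℂ] H} (hT : IsHilbertSchmidt T) :
    IsHilbertSchmidt (A * T) := by
  obtain ⟨ι, b, hb⟩ := hT
  refine ⟨ι, b, Summable.of_nonneg_of_le (fun i => sq_nonneg _) (fun i => ?_)
    (hb.mul_left (‖A‖ ^ 2))⟩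
  have h1 : ‖(A * T) (b i)‖ ≤ ‖A‖ * ‖T (b i)‖ := A.le_opNorm (T (b i))
  calc ‖(A * T) (b i)‖ ^ 2 ≤ (‖A‖ * ‖T (b i)‖) ^ 2 := by
        exact pow_le_pow_left₀ (norm_nonneg _) h1 2
    _ = ‖A‖ ^ 2 * ‖T (b i)‖ ^ 2 := by ring

lemma hs_mul_right {T : H →L[ℂ] H} (hT : IsHilbertSchmidt T) (A : H →L[ℂ] H) :
    IsHilbertSchmidt (T * A) := by
  have h1 : IsHilbertSchmidt (ContinuousLinearMap.adjoint A * ContinuousLinearMap.adjoint T) :=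
    hs_mul_left _ (hs_adjoint hT)
  have h2 := hs_adjoint h1
  rw [show ContinuousLinearMap.adjoint A * ContinuousLinearMap.adjoint T
      = ContinuousLinearMap.adjoint A ∘L ContinuousLinearMap.adjoint T from rfl,
    ContinuousLinearMap.adjoint_comp, ContinuousLinearMap.adjoint_adjoint,
    ContinuousLinearMap.adjoint_adjoint] at h2
  exact h2

lemma hs_add {S T : H →L[ℂ] H} (hS : IsHilbertSchmidt S) (hT : IsHilbertSchmidt T) :
    IsHilbertSchmidt (S + T) := by
  obtain ⟨ι, b, hb⟩ := hS
  have hT' := hs_all_bases hT b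
  refine ⟨ι, b, Summable.of_nonneg_of_le (fun i => sq_nonneg _) (fun i => ?_)
    ((hb.add hT').mul_left 2)⟩
  have h1 : ‖(S + T) (b i)‖ ≤ ‖S (b i)‖ + ‖T (b i)‖ := norm_add_le _ _
  calc ‖(S + T) (b i)‖ ^ 2 ≤ (‖S (b i)‖ + ‖T (b i)‖) ^ 2 :=
        pow_le_pow_left₀ (norm_nonneg _) h1 2
    _ ≤ 2 * (‖S (b i)‖ ^ 2 + ‖T (b i)‖ ^ 2) := by nlinarith [sq_nonneg (‖S (b i)‖ - ‖T (b i)‖)]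

lemma hs_neg {T : H →L[ℂ] H} (hT : IsHilbertSchmidt T) : IsHilbertSchmidt (-T) := by
  obtain ⟨ι, b, hb⟩ := hT
  exact ⟨ι, b, hb.congr fun i => by simp⟩

end aux2

section main
variable {H : Type} [NormedAddCommGroup H] [InnerProductSpace ℂ H] [CompleteSpace H]

lemma exp_decomp (Q : H →L[ℂ] H) :
    ∃ R : H →L[ℂ] H, NormedSpace.exp Q = 1 + Q + (Q * Q) * R := by
  have hpow : ∀ n : ℕ, ‖Q ^ n‖ ≤ ‖Q‖ ^ n := by
    intro n
    induction n with
    | zero =>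
        rw [pow_zero, pow_zero, ContinuousLinearMap.one_def]
        exact ContinuousLinearMap.norm_id_le
    | succ n ih =>
        rw [pow_succ, pow_succ]
        exact le_trans (norm_mul_le _ _)
          (mul_le_mul ih le_rfl (norm_nonneg _) (pow_nonneg (norm_nonneg _) n))
  have hsum : Summable (fun n : ℕ => ((((n + 2).factorial : ℕ) : ℂ))⁻¹ • Q ^ n) := by
    refine Summable.of_norm_bounded (Real.summable_pow_div_factorial ‖Q‖) fun n => ?_
    rw [norm_smul, norm_inv, Complex.norm_natCast]
    have h1 : ((n.factorial : ℕ) : ℝ) ≤ (((n + 2).factorial : ℕ) : ℝ) := by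
      exact_mod_cast Nat.factorial_le (by omega)
    have h2 : (0:ℝ) < ((n.factorial : ℕ) : ℝ) := by exact_mod_cast n.factorial_pos
    have h3 : (((n + 2).factorial : ℕ) : ℝ)⁻¹ ≤ ((n.factorial : ℕ) : ℝ)⁻¹ :=
      inv_anti₀ h2 h1
    calc (((n + 2).factorial : ℕ) : ℝ)⁻¹ * ‖Q ^ n‖
        ≤ ((n.factorial : ℕ) : ℝ)⁻¹ * ‖Q‖ ^ n :=
          mul_le_mul h3 (hpow n) (norm_nonneg _) (by positivity)
      _ = ‖Q‖ ^ n / (n.factorial : ℝ) := by rw [div_eq_mul_inv, mul_comm]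
  refine ⟨∑' n : ℕ, ((((n + 2).factorial : ℕ) : ℂ))⁻¹ • Q ^ n, ?_⟩
  have hf : Summable (fun n : ℕ => ((n.factorial : ℂ))⁻¹ • Q ^ n) :=
    NormedSpace.expSeries_summable' (𝕂 := ℂ) Q
  have hkey := Summable.sum_add_tsum_nat_add (f := fun n : ℕ => ((n.factorial : ℂ))⁻¹ • Q ^ n) 2 hf
  have hhead : (∑ i ∈ Finset.range 2, ((i.factorial : ℂ))⁻¹ • Q ^ i) = 1 + Q := by
    simp [Finset.sum_range_succ, Nat.factorial]
  have htail : (∑' n : ℕ, (((n + 2).factorial : ℂ))⁻¹ • Q ^ (n + 2))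
      = (Q * Q) * ∑' n : ℕ, ((((n + 2).factorial : ℕ) : ℂ))⁻¹ • Q ^ n := by
    rw [← (hsum.hasSum.mul_left (Q * Q)).tsum_eq]
    refine tsum_congr fun n => ?_
    rw [mul_smul_comm]
    congr 1
    rw [show Q * Q = Q ^ 2 from (sq Q).symm, ← pow_add, add_comm]
  rw [show NormedSpace.exp Q = ∑' n : ℕ, ((n.factorial : ℂ))⁻¹ • Q ^ n from
    congrFun (NormedSpace.exp_eq_tsum ℂ) Q, ← hkey, hhead, htail]

theorem exp_conj_proj_sub_linearization_hilbertSchmidt'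
    (Q : H →L[ℂ] H) (hskew : ContinuousLinearMap.adjoint Q = -Q)
    (hQ2 : IsHilbertSchmidt (Q * Q))
    (P : H →L[ℂ] H) (hidem : P * P = P) (hsa : IsSelfAdjoint P)
    (hoff1 : P * Q * P = 0) (hoff2 : (1 - P) * Q * (1 - P) = 0) :
    IsHilbertSchmidt (NormedSpace.exp Q * P * NormedSpace.exp (-Q) - (P + Q * P - P * Q)) ∧
      IsHilbertSchmidt
        (NormedSpace.exp Q * P * NormedSpace.exp (-Q) - (1 + Q) * P * (1 - Q)) := by
  obtain ⟨R, hR⟩ := exp_decomp Q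
  obtain ⟨S, hS⟩ := exp_decomp (-Q)
  rw [neg_mul_neg] at hS
  -- algebraic identity: Q = P*Q + Q*P
  have h3 : Q - P * Q - Q * P = 0 := by
    have hexp : (1 - P) * Q * (1 - P) = Q - P * Q - Q * P + P * Q * P := by noncomm_ring
    rw [hoff2, hoff1, add_zero] at hexp
    exact hexp.symm
  have e1 : (1 - P) * Q = Q * P := by
    rw [sub_mul, one_mul]
    exact sub_eq_zero.mp h3
  have e2 : Q * (1 - P) = P * Q := by
    rw [mul_sub, mul_one]
    refine sub_eq_zero.mp ?_
    rw [sub_right_comm]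
    exact h3
  have hQPQ : Q * P * Q = (1 - P) * (Q * Q) * (1 - P) := by
    calc Q * P * Q = Q * (P * P) * Q := by rw [hidem]
      _ = (Q * P) * (P * Q) := by noncomm_ring
      _ = ((1 - P) * Q) * (Q * (1 - P)) := by rw [e1, e2]
      _ = (1 - P) * (Q * Q) * (1 - P) := by noncomm_ring
  -- second statement
  have key : NormedSpace.exp Q * P * NormedSpace.exp (-Q) - (1 + Q) * P * (1 - Q)
      = (Q * Q) * (R * (P * NormedSpace.exp (-Q)))
        + (((1 + Q) * P) * (Q * Q)) * S := by
    rw [hS, hR]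
    noncomm_ring
  have hs2 : IsHilbertSchmidt
      (NormedSpace.exp Q * P * NormedSpace.exp (-Q) - (1 + Q) * P * (1 - Q)) := by
    rw [key]
    exact hs_add (hs_mul_right hQ2 _) (hs_mul_right (hs_mul_left _ hQ2) _)
  refine ⟨?_, hs2⟩
  have key2 : NormedSpace.exp Q * P * NormedSpace.exp (-Q) - (P + Q * P - P * Q)
      = (NormedSpace.exp Q * P * NormedSpace.exp (-Q) - (1 + Q) * P * (1 - Q))
        + (-((1 - P) * (Q * Q) * (1 - P))) := by
    rw [← hQPQ]
    noncomm_ring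
  rw [key2]
  exact hs_add hs2 (hs_neg (hs_mul_right (hs_mul_left _ hQ2) _))

end main

/-- Let `Q` be a bounded skew-adjoint operator with `Q²` Hilbert–Schmidt, and `P` an
orthogonal projection with `PQP = 0` and `(1-P)Q(1-P) = 0` (i.e. `Q` is off-diagonal for
`ran P ⊕ ker P`). Then `e^Q P e^{-Q} - (P + QP - PQ)` is Hilbert–Schmidt; in particular
`e^Q P e^{-Q} - (1+Q)P(1-Q)` is Hilbert–Schmidt. -/
theorem exp_conj_proj_sub_linearization_hilbertSchmidt
    (H : Type) [NormedAddCommGroup H] [InnerProductSpace ℂ H] [CompleteSpace H]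
    (Q : H →L[ℂ] H) (hskew : adjoint Q = -Q)
    (hQ2 : IsHilbertSchmidt (Q * Q))
    (P : H →L[ℂ] H) (hidem : P * P = P) (hsa : IsSelfAdjoint P)
    (hoff1 : P * Q * P = 0) (hoff2 : (1 - P) * Q * (1 - P) = 0) :
    IsHilbertSchmidt (NormedSpace.exp Q * P * NormedSpace.exp (-Q) - (P + Q * P - P * Q)) ∧
      IsHilbertSchmidt
        (NormedSpace.exp Q * P * NormedSpace.exp (-Q) - (1 + Q) * P * (1 - Q)) := by
  exact exp_conj_proj_sub_linearization_hilbertSchmidt' Q hskew hQ2 P hidem hsa hoff1 hoff2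
end
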